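/- Assume Ω is nonempty and inf_{x∈Ω} q(x) > −∞. Let (x^{k_i}) be points of Ω of the form x^{k_i} = y^{k_i} + α^{k_i} d^{k_i}, where the y^{k_i} ∈ ℝⁿ are bounded, α^{k_i} ≥ 0 with α^{k_i} → ∞, d^{k_i} ∈ Ω₁^∞ with d^{k_i} → d, and the objective values q(x^{k_i}) are bounded above. Then d ∈ Ω₁^∞ and dᵀQd = 0. (The claim that every direction in D̄ is an asymptotic direction with dᵀQd = 0, used before Theorem 3.4.) -/

import Mathlib

open Matrix Filter Topology

/-- Euclidean norm of a finitely-indexed real vector. -/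
noncomputable def vnorm {ι : Type*} [Fintype ι] (v : ι → ℝ) : ℝ :=
  Real.sqrt (v ⬝ᵥ v)

/-- Membership in the (possibly unbounded) box `Ω = {x | l ≤ x ≤ u}`,
with extended-real bounds. -/
def inBox {n : ℕ} (l u : Fin n → EReal) (x : Fin n → ℝ) : Prop :=
  ∀ j, l j ≤ (x j : EReal) ∧ (x j : EReal) ≤ u j

/-- `d` is a recession direction of the box `Ω`. -/
def recDir {n : ℕ} (l u : Fin n → EReal) (d : Fin n → ℝ) : Prop :=
  ∀ x, inBox l u x → ∀ α : ℝ, 0 ≤ α → inBox l u (x + α • d)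

/-- The quadratic objective `q(x) = ½ xᵀQx + rᵀx`. -/
noncomputable def qf {n : ℕ} (Q : Matrix (Fin n) (Fin n) ℝ) (r : Fin n → ℝ)
    (x : Fin n → ℝ) : ℝ :=
  (1 / 2) * (x ⬝ᵥ Q *ᵥ x) + r ⬝ᵥ x

lemma vnorm_nonneg' {ι : Type*} [Fintype ι] (v : ι → ℝ) : 0 ≤ vnorm v := Real.sqrt_nonneg _

lemma abs_le_vnorm {ι : Type*} [Fintype ι] (v : ι → ℝ) (j : ι) : |v j| ≤ vnorm v := by
  rw [vnorm, dotProduct, ← Real.sqrt_sq_eq_abs]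
  apply Real.sqrt_le_sqrt
  rw [sq]
  exact Finset.single_le_sum (f := fun k => v k * v k) (fun k _ => mul_self_nonneg _)
    (Finset.mem_univ j)

lemma quad_abs_le {n : ℕ} (Q : Matrix (Fin n) (Fin n) ℝ) (v w : Fin n → ℝ) :
    |v ⬝ᵥ Q *ᵥ w| ≤ (∑ j, ∑ k, |Q j k|) * vnorm v * vnorm w := by
  have h : v ⬝ᵥ Q *ᵥ w = ∑ j, ∑ k, v j * (Q j k * w k) := by
    simp [dotProduct, mulVec, Finset.mul_sum]
  rw [h]
  calc |∑ j, ∑ k, v j * (Q j k * w k)| ≤ ∑ j, ∑ k, |v j * (Q j k * w k)| := by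
        refine (Finset.abs_sum_le_sum_abs _ _).trans ?_
        exact Finset.sum_le_sum fun j _ => Finset.abs_sum_le_sum_abs _ _
    _ ≤ ∑ j, ∑ k, |Q j k| * (vnorm v * vnorm w) := by
        refine Finset.sum_le_sum fun j _ => Finset.sum_le_sum fun k _ => ?_
        rw [abs_mul, abs_mul]
        calc |v j| * (|Q j k| * |w k|) = |Q j k| * (|v j| * |w k|) := by ring
          _ ≤ |Q j k| * (vnorm v * vnorm w) :=
              mul_le_mul_of_nonneg_left
                (mul_le_mul (abs_le_vnorm v j) (abs_le_vnorm w k) (abs_nonneg _)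
                  (vnorm_nonneg' _)) (abs_nonneg _)
    _ = (∑ j, ∑ k, |Q j k|) * vnorm v * vnorm w := by
        simp [← Finset.sum_mul, mul_assoc]

lemma dot_abs_le {n : ℕ} (r v : Fin n → ℝ) : |r ⬝ᵥ v| ≤ (∑ j, |r j|) * vnorm v := by
  rw [dotProduct]
  calc |∑ j, r j * v j| ≤ ∑ j, |r j * v j| := Finset.abs_sum_le_sum_abs _ _
    _ ≤ ∑ j, |r j| * vnorm v := by
        refine Finset.sum_le_sum fun j _ => ?_
        rw [abs_mul]
        exact mul_le_mul_of_nonneg_left (abs_le_vnorm v j) (abs_nonneg _)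
    _ = (∑ j, |r j|) * vnorm v := by rw [Finset.sum_mul]

lemma qf_expand {n : ℕ} (Q : Matrix (Fin n) (Fin n) ℝ) (r : Fin n → ℝ)
    (y w : Fin n → ℝ) (a : ℝ) :
    qf Q r (y + a • w) = qf Q r y
      + a * ((1/2) * (y ⬝ᵥ Q *ᵥ w + w ⬝ᵥ Q *ᵥ y) + r ⬝ᵥ w)
      + (1/2) * a^2 * (w ⬝ᵥ Q *ᵥ w) := by
  simp only [qf, mulVec_add, mulVec_smul, dotProduct_add, add_dotProduct,
    dotProduct_smul, smul_dotProduct, smul_eq_mul]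
  ring

lemma vnorm_continuous {n : ℕ} : Continuous (vnorm : (Fin n → ℝ) → ℝ) := by
  unfold vnorm dotProduct
  exact Real.continuous_sqrt.comp
    (continuous_finset_sum _ fun j _ => (continuous_apply j).mul (continuous_apply j))

lemma quadform_continuous {n : ℕ} (Q : Matrix (Fin n) (Fin n) ℝ) :
    Continuous (fun v : Fin n → ℝ => v ⬝ᵥ Q *ᵥ v) := by
  simp only [dotProduct, mulVec]
  exact continuous_finset_sum _ fun j _ => (continuous_apply j).mul
    (continuous_finset_sum _ fun k _ => continuous_const.mul (continuous_apply k))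

/-- Every direction in `D̄` is a unit recession direction with `dᵀQd = 0`
(claim preceding Theorem 3.4): if `x^{k_i} = y^{k_i} + α^{k_i} d^{k_i} ∈ Ω` with
`y^{k_i}` bounded, `α^{k_i} → ∞`, `d^{k_i} ∈ Ω₁^∞`, `d^{k_i} → d` and the values
`q(x^{k_i})` bounded above, then `d ∈ Ω₁^∞` and `dᵀQd = 0`. -/
theorem limit_direction_unit_recession_zero_curvature {n : ℕ} (hn : 1 ≤ n)
    (l u : Fin n → EReal)
    (hl : ∀ j, l j ≠ ⊤) (hu : ∀ j, u j ≠ ⊥) (hlu : ∀ j, l j < u j)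
    (Q : Matrix (Fin n) (Fin n) ℝ) (hQ : Q.IsSymm) (r : Fin n → ℝ)
    (hne : ∃ x, inBox l u x)
    (hbdd : ∃ B : ℝ, ∀ z, inBox l u z → B ≤ qf Q r z)
    (p y : ℕ → Fin n → ℝ) (α : ℕ → ℝ) (dd : ℕ → Fin n → ℝ) (d : Fin n → ℝ)
    (hp : ∀ i, inBox l u (p i))
    (hdecomp : ∀ i, p i = y i + α i • dd i)
    (hybdd : ∃ C : ℝ, ∀ i, vnorm (y i) ≤ C)
    (hα : ∀ i, 0 ≤ α i) (hαto : Tendsto α atTop atTop)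
    (hdd : ∀ i, recDir l u (dd i)) (hdd1 : ∀ i, vnorm (dd i) = 1)
    (hdto : Tendsto dd atTop (𝓝 d))
    (hqbdd : ∃ B' : ℝ, ∀ i, qf Q r (p i) ≤ B') :
    (recDir l u d ∧ vnorm d = 1) ∧ d ⬝ᵥ Q *ᵥ d = 0 := by
  obtain ⟨x0, hx0⟩ := hne
  obtain ⟨B, hB⟩ := hbdd
  obtain ⟨C0, hC0⟩ := hybdd
  obtain ⟨B', hB'⟩ := hqbdd
  have hcoord : ∀ j, Tendsto (fun i => dd i j) atTop (𝓝 (d j)) :=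
    fun j => (tendsto_pi_nhds.mp hdto) j
  -- d is a recession direction
  have hdrec : recDir l u d := by
    intro x hx a ha j
    have ht : Tendsto (fun i => ((x j + a * dd i j : ℝ) : EReal)) atTop
        (𝓝 ((x j + a * d j : ℝ) : EReal)) :=
      (continuous_coe_real_ereal.tendsto _).comp
        (tendsto_const_nhds.add (tendsto_const_nhds.mul (hcoord j)))
    have hgoal1 : l j ≤ ((x j + a * d j : ℝ) : EReal) := by
      refine ge_of_tendsto' ht fun i => ?_
      simpa using (hdd i x hx a ha j).1
    have hgoal2 : ((x j + a * d j : ℝ) : EReal) ≤ u j := by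
      refine le_of_tendsto' ht fun i => ?_
      simpa using (hdd i x hx a ha j).2
    constructor
    · simpa using hgoal1
    · simpa using hgoal2
  -- unit norm
  have hv1 : vnorm d = 1 := by
    have h1 : Tendsto (fun i => vnorm (dd i)) atTop (𝓝 (vnorm d)) :=
      (vnorm_continuous.tendsto d).comp hdto
    have h2 : Tendsto (fun i => vnorm (dd i)) atTop (𝓝 (1 : ℝ)) := by
      simp only [hdd1]; exact tendsto_const_nhds
    exact tendsto_nhds_unique h1 h2
  -- curvature
  set t := d ⬝ᵥ Q *ᵥ d with htdef
  have hst : Tendsto (fun i => dd i ⬝ᵥ Q *ᵥ dd i) atTop (𝓝 t) :=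
    ((quadform_continuous Q).tendsto d).comp hdto
  have hge : 0 ≤ t := by
    by_contra h
    push_neg at h
    set q0 := qf Q r x0 with hq0def
    set c := (1/2) * (x0 ⬝ᵥ Q *ᵥ d + d ⬝ᵥ Q *ᵥ x0) + r ⬝ᵥ d with hcdef
    have hall : ∀ a : ℝ, 0 ≤ a → B ≤ q0 + a * c + (1/2)*a^2*t := by
      intro a ha
      have := hB _ (hdrec x0 hx0 a ha)
      rwa [qf_expand] at this
    have h1 : Tendsto (fun a : ℝ => a * (t/2)) atTop atBot :=
      tendsto_id.atTop_mul_const_of_neg (by linarith)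
    have h2 : Tendsto (fun a : ℝ => a * (t/2) + c) atTop atBot :=
      tendsto_atBot_add_const_right _ c h1
    have h3 : Tendsto (fun a : ℝ => a * (a * (t/2) + c)) atTop atBot :=
      tendsto_id.atTop_mul_atBot₀ h2
    have h4 : Tendsto (fun a : ℝ => q0 + a * c + (1/2)*a^2*t) atTop atBot := by
      have h5 := tendsto_atBot_add_const_right atTop q0 h3
      exact h5.congr fun a => by ring
    obtain ⟨a, halt, ha0⟩ :=
      ((h4.eventually (eventually_lt_atBot B)).and (eventually_ge_atTop (0:ℝ))).exists
    linarith [hall a ha0]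
  have hle : t ≤ 0 := by
    by_contra h
    push_neg at h
    set M := ∑ j, ∑ k, |Q j k| with hMdef
    set R := ∑ j, |r j| with hRdef
    have hM : 0 ≤ M := Finset.sum_nonneg fun j _ => Finset.sum_nonneg fun k _ => abs_nonneg _
    have hR : 0 ≤ R := Finset.sum_nonneg fun j _ => abs_nonneg _
    have hC0' : 0 ≤ C0 := le_trans (vnorm_nonneg' (y 0)) (hC0 0)
    set K0 := (1/2) * (M * C0 * C0) + R * C0 with hK0def
    set K1 := M * C0 + R with hK1def
    clear_value M R K0 K1
    have hy0 : ∀ i, -K0 ≤ qf Q r (y i) := by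
      intro i
      have hv := hC0 i
      have hvn := vnorm_nonneg' (y i)
      have h1 := quad_abs_le Q (y i) (y i)
      have h2 := dot_abs_le r (y i)
      rw [← hMdef] at h1
      rw [← hRdef] at h2
      have e0 : vnorm (y i) * vnorm (y i) ≤ C0 * C0 := mul_le_mul hv hv hvn hC0'
      have e1 : M * vnorm (y i) * vnorm (y i) ≤ M * C0 * C0 := by
        calc M * vnorm (y i) * vnorm (y i) = M * (vnorm (y i) * vnorm (y i)) := by ring
          _ ≤ M * (C0 * C0) := mul_le_mul_of_nonneg_left e0 hM
          _ = M * C0 * C0 := by ring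
      have e2 : R * vnorm (y i) ≤ R * C0 := mul_le_mul_of_nonneg_left hv hR
      obtain ⟨h1l, _⟩ := abs_le.mp h1
      obtain ⟨h2l, _⟩ := abs_le.mp h2
      rw [hK0def]
      simp only [qf]
      linarith
    have hc1 : ∀ i, -K1 ≤ (1/2) * (y i ⬝ᵥ Q *ᵥ dd i + dd i ⬝ᵥ Q *ᵥ y i) + r ⬝ᵥ dd i := by
      intro i
      have hv := hC0 i
      have h1 := quad_abs_le Q (y i) (dd i)
      have h2 := quad_abs_le Q (dd i) (y i)
      have h3 := dot_abs_le r (dd i)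
      rw [hdd1 i] at h1 h2 h3
      rw [← hMdef] at h1 h2
      rw [← hRdef] at h3
      have e1 : M * vnorm (y i) * 1 ≤ M * C0 := by
        have := mul_le_mul_of_nonneg_left hv hM
        linarith
      have e2 : M * 1 * vnorm (y i) ≤ M * C0 := by
        have := mul_le_mul_of_nonneg_left hv hM
        linarith
      obtain ⟨h1l, _⟩ := abs_le.mp h1
      obtain ⟨h2l, _⟩ := abs_le.mp h2
      obtain ⟨h3l, _⟩ := abs_le.mp h3
      rw [hK1def]
      linarith
    have hev1 : ∀ᶠ i in atTop, t/2 ≤ dd i ⬝ᵥ Q *ᵥ dd i :=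
      hst.eventually (eventually_ge_nhds (by linarith))
    have hlow : ∀ᶠ i in atTop,
        -K0 - α i * K1 + (1/4) * (α i)^2 * t ≤ qf Q r (p i) := by
      filter_upwards [hev1] with i hi
      have hexp : qf Q r (p i) = qf Q r (y i)
          + α i * ((1/2) * (y i ⬝ᵥ Q *ᵥ dd i + dd i ⬝ᵥ Q *ᵥ y i) + r ⬝ᵥ dd i)
          + (1/2) * (α i)^2 * (dd i ⬝ᵥ Q *ᵥ dd i) := by
        rw [hdecomp i, qf_expand]
      have hαi := hα i
      have t1 := hy0 i
      have t2 : -(α i * K1) ≤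
          α i * ((1/2) * (y i ⬝ᵥ Q *ᵥ dd i + dd i ⬝ᵥ Q *ᵥ y i) + r ⬝ᵥ dd i) := by
        have := mul_le_mul_of_nonneg_left (hc1 i) hαi
        linarith [this]
      have t3 : (1/4) * (α i)^2 * t ≤ (1/2) * (α i)^2 * (dd i ⬝ᵥ Q *ᵥ dd i) := by
        nlinarith [sq_nonneg (α i)]
      rw [hexp]
      linarith [t1, t2, t3]
    have hbase : Tendsto (fun a : ℝ => -K0 - a * K1 + (1/4)*a^2*t) atTop atTop := by
      have h1 : Tendsto (fun a : ℝ => a * (t/4)) atTop atTop :=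
        tendsto_id.atTop_mul_const (by linarith)
      have h2 : Tendsto (fun a : ℝ => a * (t/4) + -K1) atTop atTop :=
        tendsto_atTop_add_const_right _ (-K1) h1
      have h3 : Tendsto (fun a : ℝ => a * (a * (t/4) + -K1)) atTop atTop :=
        tendsto_id.atTop_mul_atTop₀ h2
      have h4 := tendsto_atTop_add_const_right atTop (-K0) h3
      exact h4.congr fun a => by ring
    have hLto : Tendsto (fun i => -K0 - α i * K1 + (1/4)*(α i)^2*t) atTop atTop :=
      hbase.comp hαto
    obtain ⟨i, hgt, hlo⟩ := ((hLto.eventually (eventually_gt_atTop B')).and hlow).exists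
    linarith [hB' i]
  exact ⟨⟨hdrec, hv1⟩, le_antisymm hle hge⟩
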